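/- arXiv:2002.02789 — 4 statements merged into one kernel-verified Lean document; each statement's English description precedes it below -/
import Mathlib

section
/- If the envy graph of an allocation X contains no directed cycle of positive total weight, then X is envy-freeable: there exists a nonnegative payment vector π such that v_i(X_i) + π_i ≥ v_i(X_j) + π_j for all agents i, j. Moreover, setting π_i equal to the maximum total weight of a simple directed path starting at node i in the envy graph yields such a payment vector. -/
/-!
Let `π i` be the largest weight of a simple path starting at `i`. For an edge `(i, j)`, prepend
`i` to an optimal path from `j`. If the result is still simple, its weight `w i j + π j` is at
most `π i`. Otherwise it passes through `i` a second time. It then splits into a cycle through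
`i`, which has nonpositive weight by assumption, and a simple path from `i`. So the bound
`w i j + π j ≤ π i` holds in either case, and this is exactly envy-freeness.
-/

/-- Total weight of a walk (list of vertices) under edge weights `w`. -/
def walkWeight {V : Type*} (w : V → V → ℝ) : List V → ℝ
  | [] => 0
  | [_] => 0
  | a :: b :: l => w a b + walkWeight w (b :: l)

section

variable {V : Type*} (w : V → V → ℝ)

@[simp]
lemma walkWeight_cons_cons (a b : V) (l : List V) :
    walkWeight w (a :: b :: l) = w a b + walkWeight w (b :: l) := rfl

lemma walkWeight_append_cons (l₁ : List V) (x : V) (l₂ : List V) :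
    walkWeight w (l₁ ++ x :: l₂) = walkWeight w (l₁ ++ [x]) + walkWeight w (x :: l₂) := by
  induction l₁ with
  | nil => simp [walkWeight]
  | cons a t ih =>
    cases t with
    | nil => simp [walkWeight]
    | cons b t =>
      simp only [List.cons_append, walkWeight_cons_cons] at ih ⊢
      rw [ih, add_assoc]

def NoPositiveCycle : Prop :=
  ∀ (a : V) (l : List V), (a :: l).Nodup → walkWeight w (a :: (l ++ [a])) ≤ 0

def simplePathWeights (i : V) : Set ℝ :=
  {x | ∃ l : List V, l.Nodup ∧ l.head? = some i ∧ x = walkWeight w l}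

noncomputable def maxPathWeight (i : V) : ℝ :=
  sSup (simplePathWeights w i)

lemma walkWeight_mem_simplePathWeights {i : V} {l : List V} (hl : (i :: l).Nodup) :
    walkWeight w (i :: l) ∈ simplePathWeights w i :=
  ⟨i :: l, hl, rfl, rfl⟩

lemma zero_mem_simplePathWeights (i : V) : 0 ∈ simplePathWeights w i :=
  walkWeight_mem_simplePathWeights w (List.nodup_singleton i)

lemma simplePathWeights_finite [Finite V] (i : V) : (simplePathWeights w i).Finite := by
  refine ((List.finite_length_le V (Nat.card V)).image (walkWeight w)).subset ?_
  rintro x ⟨l, hl, -, rfl⟩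
  exact ⟨l, hl.length_le_natCard, rfl⟩

variable [Finite V]

lemma isGreatest_maxPathWeight (i : V) :
    IsGreatest (simplePathWeights w i) (maxPathWeight w i) :=
  ⟨Set.Nonempty.csSup_mem ⟨0, zero_mem_simplePathWeights w i⟩ (simplePathWeights_finite w i),
    fun _ hx => le_csSup (simplePathWeights_finite w i).bddAbove hx⟩

lemma le_maxPathWeight {i : V} {x : ℝ} (hx : x ∈ simplePathWeights w i) :
    x ≤ maxPathWeight w i :=
  (isGreatest_maxPathWeight w i).2 hx

lemma maxPathWeight_nonneg (i : V) : 0 ≤ maxPathWeight w i :=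
  le_maxPathWeight w (zero_mem_simplePathWeights w i)

variable {w}

lemma walkWeight_cons_le_maxPathWeight (hw : NoPositiveCycle w) (i : V) {l : List V}
    (hl : l.Nodup) : walkWeight w (i :: l) ≤ maxPathWeight w i := by
  by_cases hi : i ∈ l
  · obtain ⟨p, q, rfl⟩ := List.append_of_mem hi
    have hip : i ∉ p := fun h => List.disjoint_of_nodup_append hl h List.mem_cons_self
    have hcycle : walkWeight w (i :: (p ++ [i])) ≤ 0 :=
      hw i p (List.nodup_cons.2 ⟨hip, hl.of_append_left⟩)
    have hpath : walkWeight w (i :: q) ≤ maxPathWeight w i :=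
      le_maxPathWeight w (walkWeight_mem_simplePathWeights w hl.of_append_right)
    have hsplit := walkWeight_append_cons w (i :: p) i q
    simp only [List.cons_append] at hsplit
    linarith
  · exact le_maxPathWeight w (walkWeight_mem_simplePathWeights w (List.nodup_cons.2 ⟨hi, hl⟩))

lemma add_maxPathWeight_le (hw : NoPositiveCycle w) (i j : V) :
    w i j + maxPathWeight w j ≤ maxPathWeight w i := by
  obtain ⟨_ | ⟨_, l⟩, hl, ⟨⟩, hmax⟩ := (isGreatest_maxPathWeight w j).1
  rw [hmax, ← walkWeight_cons_cons]
  exact walkWeight_cons_le_maxPathWeight hw i hl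

end

/-- If the envy graph of an allocation (with `v i j` the value of agent `i` for
bundle `j`, and edge weight `v i j - v i i`) has no directed cycle of positive
total weight, then the allocation is envy-freeable; moreover the payments
`π i` = maximum total weight of a simple path starting at `i` witness this. -/
theorem stmt1 {n : ℕ} (v : Fin n → Fin n → ℝ)
    (hcyc : ∀ (a : Fin n) (l : List (Fin n)), (a :: l).Nodup →
      walkWeight (fun i j => v i j - v i i) (a :: (l ++ [a])) ≤ 0) :
    ∃ π : Fin n → ℝ,
      (∀ i, IsGreatest {x : ℝ | ∃ l : List (Fin n), l.Nodup ∧ l.head? = some i ∧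
        x = walkWeight (fun i j => v i j - v i i) l} (π i)) ∧
      (∀ i, 0 ≤ π i) ∧ ∀ i j, v i i + π i ≥ v i j + π j := by
  refine ⟨maxPathWeight (fun i j => v i j - v i i), isGreatest_maxPathWeight _,
    maxPathWeight_nonneg _, fun i j => ?_⟩
  have := add_maxPathWeight_le hcyc i j
  linarith
end

section
/- If an allocation X is envy-freeable (i.e., admits a nonnegative payment vector π making (X,π) envy-free), then X maximizes social welfare among all reassignments of its bundles: for every permutation σ of the agents, Σ_i v_i(X_{σ(i)}) ≤ Σ_i v_i(X_i). -/
/-- If an allocation is envy-freeable (here `v i j` denotes the value of agent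
`i` for the bundle of agent `j`), then it maximizes social welfare among all
reassignments of its bundles to the agents. -/
theorem stmt2 {n : ℕ} (v : Fin n → Fin n → ℝ)
    (hEF : ∃ π : Fin n → ℝ, (∀ i, 0 ≤ π i) ∧
      ∀ i j, v i i + π i ≥ v i j + π j) :
    ∀ σ : Equiv.Perm (Fin n), ∑ i, v i (σ i) ≤ ∑ i, v i i := by
  obtain ⟨π, -, h⟩ := hEF
  intro σ
  have key : ∑ i, (v i (σ i) + π (σ i)) ≤ ∑ i, (v i i + π i) :=
    Finset.sum_le_sum fun i _ => h i (σ i)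
  have hperm : ∑ i, π (σ i) = ∑ i, π i :=
    Equiv.sum_comp σ π
  simp only [Finset.sum_add_distrib, hperm] at key
  linarith
end

section
/- An allocation X maximizes social welfare among all reassignments of its bundles to agents (i.e., Σ_i v_i(X_{σ(i)}) ≤ Σ_i v_i(X_i) for every permutation σ) if and only if the envy graph of X contains no directed cycle of positive total weight. -/
/-!
Write `w i j = v i j - v i i` for the envy weights. The welfare gain of reassigning the bundles
along a permutation `σ` is `∑ i, w i (σ i)`, and the weight of a cycle is exactly the gain of the
cyclic permutation it traces. Since `w` vanishes on the diagonal, gains add up over disjoint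
permutations, so decomposing `σ` into disjoint cycles reduces the welfare bound to the cycle bound.
-/

open Equiv

section WalkWeight

variable {V : Type*} (w : V → V → ℝ)

theorem walkWeight_eq_sum_zip :
    ∀ L : List V, walkWeight w L = ((L.zip L.tail).map fun p => w p.1 p.2).sum
  | [] | [_] => by simp [walkWeight]
  | a :: b :: l => by simp [walkWeight, walkWeight_eq_sum_zip (b :: l)]

theorem walkWeight_closed_eq_sum_zip_rotate (a : V) (l : List V) :
    walkWeight w (a :: (l ++ [a])) =
      (((a :: l).zip ((a :: l).rotate 1)).map fun p => w p.1 p.2).sum := by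
  have hzip : (a :: (l ++ [a])).zip (l ++ [a]) = (a :: l).zip (l ++ [a]) := by
    simpa using List.zip_append (r₁ := [a]) (r₂ := []) (l₁ := a :: l) (l₂ := l ++ [a]) (by simp)
  rw [walkWeight_eq_sum_zip, List.tail_cons, hzip, List.rotate_cons_succ, List.rotate_zero]

theorem List.zip_rotate_one_eq_map_formPerm [DecidableEq V] {L : List V} (hL : L.Nodup) :
    L.zip (L.rotate 1) = L.map fun x => (x, L.formPerm x) := by
  refine List.ext_getElem (by simp) fun i h₁ h₂ => ?_
  simp [List.getElem_rotate, List.formPerm_apply_getElem _ hL]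

theorem walkWeight_cycle_eq_sum_formPerm [Fintype V] [DecidableEq V] {w : V → V → ℝ}
    (hw : ∀ x, w x x = 0) {a : V} {l : List V} (hl : (a :: l).Nodup) :
    walkWeight w (a :: (l ++ [a])) = ∑ x, w x ((a :: l).formPerm x) := by
  rw [walkWeight_closed_eq_sum_zip_rotate, List.zip_rotate_one_eq_map_formPerm hl, List.map_map,
    ← List.sum_toFinset _ hl]
  refine Finset.sum_subset (Finset.subset_univ _) fun x _ hx => ?_
  rw [Function.comp_apply, List.formPerm_apply_of_notMem (by simpa using hx), hw]

end WalkWeight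

namespace Equiv.Perm

variable {V : Type*} [Fintype V] {w : V → V → ℝ}

theorem sum_apply_mul_of_disjoint (hw : ∀ x, w x x = 0) {σ τ : Perm V} (hστ : Disjoint σ τ) :
    ∑ x, w x ((σ * τ) x) = ∑ x, w x (σ x) + ∑ x, w x (τ x) := by
  rw [← Finset.sum_add_distrib]
  refine Finset.sum_congr rfl fun x _ => ?_
  rcases hστ x with hσ | hτ
  · rw [hστ.commute.eq, mul_apply, hσ, hw, zero_add]
  · rw [mul_apply, hτ, hw, add_zero]

theorem IsCycle.exists_nodup_formPerm_eq [DecidableEq V] {σ : Perm V} (hσ : σ.IsCycle) :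
    ∃ a l, (a :: l).Nodup ∧ (a :: l).formPerm = σ := by
  obtain ⟨⟨L⟩, ⟨hL, hσL⟩, -⟩ := hσ.existsUnique_cycle
  cases L with
  | nil => exact absurd hσL.symm hσ.ne_one
  | cons a l => exact ⟨a, l, hL, hσL⟩

theorem sum_apply_nonpos_of_walkWeight_cycle_nonpos [DecidableEq V] (hw : ∀ x, w x x = 0)
    (hcyc : ∀ a l, (a :: l).Nodup → walkWeight w (a :: (l ++ [a])) ≤ 0) (σ : Perm V) :
    ∑ x, w x (σ x) ≤ 0 := by
  induction σ using cycle_induction_on with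
  | base_one => simp [hw]
  | base_cycles σ hσ =>
    obtain ⟨a, l, hl, rfl⟩ := hσ.exists_nodup_formPerm_eq
    exact walkWeight_cycle_eq_sum_formPerm hw hl ▸ hcyc a l hl
  | induction_disjoint σ τ hστ _ hσ hτ =>
    rw [sum_apply_mul_of_disjoint hw hστ]
    exact add_nonpos hσ hτ

end Equiv.Perm

/-- An allocation (with `v i j` the value of agent `i` for bundle `j`)
maximizes social welfare among all reassignments of its bundles iff its envy
graph contains no directed cycle of positive total weight. -/
theorem stmt3 {n : ℕ} (v : Fin n → Fin n → ℝ) :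
    (∀ σ : Equiv.Perm (Fin n), ∑ i, v i (σ i) ≤ ∑ i, v i i) ↔
    (∀ (a : Fin n) (l : List (Fin n)), (a :: l).Nodup →
      walkWeight (fun i j => v i j - v i i) (a :: (l ++ [a])) ≤ 0) := by
  set w : Fin n → Fin n → ℝ := fun i j => v i j - v i i
  have hw : ∀ i, w i i = 0 := fun i => sub_self (v i i)
  have hgain : ∀ σ : Perm (Fin n), ∑ i, w i (σ i) = ∑ i, v i (σ i) - ∑ i, v i i :=
    fun σ => Finset.sum_sub_distrib _ _
  constructor
  · intro hopt a l hl
    rw [walkWeight_cycle_eq_sum_formPerm hw hl, hgain]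
    exact sub_nonpos.2 (hopt _)
  · intro hcyc σ
    have hσ := Perm.sum_apply_nonpos_of_walkWeight_cycle_nonpos hw hcyc σ
    rwa [hgain, sub_nonpos] at hσ
end

section
/- Suppose (X, π) is envy-free with payments π ≥ 0. Then for every agent i, π_i is at least the maximum total weight of any simple directed path originating at node i in the envy graph of X, where edge (j,k) has weight v_j(X_k) − v_j(X_j). -/
lemma walkWeight_telescope {n : ℕ} (v : Fin n → Fin n → ℝ) (π : Fin n → ℝ)
    (hEF : ∀ i j, v i i + π i ≥ v i j + π j) :
    ∀ (l : List (Fin n)) (a : Fin n),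
      walkWeight (fun j k => v j k - v j j) (a :: l) ≤ π a - π ((a :: l).getLast (by simp)) := by
  intro l
  induction l with
  | nil => intro a; simp [walkWeight]
  | cons b t ih =>
    intro a
    have h1 : v a b - v a a ≤ π a - π b := by have := hEF a b; linarith
    have h2 := ih b
    have h3 : (a :: b :: t).getLast (by simp) = (b :: t).getLast (by simp) := rfl
    simp only [walkWeight] at *
    rw [h3]
    linarith

/-- If `(X, π)` is envy-free with nonnegative payments (`v i j` is the value
of agent `i` for bundle `j`), then `π i` is at least the total weight of any
simple directed path originating at `i` in the envy graph of `X`. -/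
theorem stmt9 {n : ℕ} (v : Fin n → Fin n → ℝ) (π : Fin n → ℝ)
    (hpos : ∀ i, 0 ≤ π i)
    (hEF : ∀ i j, v i i + π i ≥ v i j + π j)
    (i : Fin n) (l : List (Fin n)) (hnd : l.Nodup) (hhead : l.head? = some i) :
    walkWeight (fun j k => v j k - v j j) l ≤ π i := by
  match l, hhead with
  | a :: t, hhead =>
    have : a = i := by simpa using hhead
    subst this
    have := walkWeight_telescope v π hEF t a
    have := hpos ((a :: t).getLast (by simp))
    linarith
end
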